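/- arXiv:1701.03308 — 2 statements merged into one kernel-verified Lean document; each statement's English description precedes it below -/
import Mathlib

section
/- Let m ≥ 1 and N ≥ 1 be natural numbers, and let H_1, …, H_N be independent random variables each uniformly distributed on {0, 1, …, m−1}. Let Z be the number of positions j ∈ {0, …, m−1} such that no H_i equals j, and let p = (1 − 1/m)^N. Then for every real ε > 0, the probability that |Z − m·p| > ε·m is at most 2·exp(−ε²·m²/(2N)). -/
/-!
The number `Z` of empty bins is a function of the hash tuple `(H₁, …, H_N)`, which is uniformly
distributed on `Fin N → Fin m`, and changing a single hash value changes `Z` by at most one.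
McDiarmid's bounded-differences argument therefore applies: averaging out one coordinate at a
time, Hoeffding's lemma bounds each conditional exponential moment by `exp (λ² / 2)`, so
`𝔼 exp (λ (Z - 𝔼 Z)) ≤ exp (N λ² / 2)`, and Markov's inequality with `λ = t / N` gives the tail
bound `exp (-t² / (2N))` on each side, used with `t = ε m`. Finally `𝔼 Z = m (1 - 1/m)^N`, since
each bin is missed by all `N` hashes with probability `(1 - 1/m)^N`.
-/

open MeasureTheory ProbabilityTheory Finset Real
open scoped ENNReal BigOperators

theorem exp_mul_le_cosh_add_mul_sinh {x : ℝ} (hx : |x| ≤ 1) (l : ℝ) :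
    exp (l * x) ≤ cosh l + x * sinh l := by
  obtain ⟨hx₁, hx₂⟩ := abs_le.mp hx
  have hconv := convexOn_exp.2 (Set.mem_univ (-l)) (Set.mem_univ l)
    (show 0 ≤ (1 - x) / 2 by linarith) (show 0 ≤ (1 + x) / 2 by linarith) (by ring)
  calc exp (l * x) = exp ((1 - x) / 2 * (-l) + (1 + x) / 2 * l) := by ring_nf
    _ ≤ (1 - x) / 2 * exp (-l) + (1 + x) / 2 * exp l := by simpa only [smul_eq_mul] using hconv
    _ = cosh l + x * sinh l := by rw [cosh_eq, sinh_eq]; ring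

theorem expect_exp_mul_le_of_expect_eq_zero {β : Type*} [Fintype β] [Nonempty β] {h : β → ℝ}
    (h_mean : 𝔼 v, h v = 0) (h_bound : ∀ v, |h v| ≤ 1) (l : ℝ) :
    𝔼 v, exp (l * h v) ≤ exp (l ^ 2 / 2) :=
  calc 𝔼 v, exp (l * h v) ≤ 𝔼 v, (cosh l + h v * sinh l) :=
        expect_le_expect fun v _ ↦ exp_mul_le_cosh_add_mul_sinh (h_bound v) l
    _ = cosh l := by
        rw [expect_add_distrib, ← expect_mul, h_mean, Fintype.expect_const, zero_mul, add_zero]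
    _ ≤ exp (l ^ 2 / 2) := cosh_le_exp_half_sq l

theorem Fin.expect_fun_succ {α M : Type*} [Fintype α] [AddCommMonoid M] [Module ℚ≥0 M] (n : ℕ)
    (F : (Fin (n + 1) → α) → M) :
    𝔼 x, F x = 𝔼 y : Fin n → α, 𝔼 v, F (Fin.cons v y) := by
  rw [← Fintype.expect_equiv (Fin.consEquiv fun _ ↦ α) (fun p ↦ F (Fin.cons p.1 p.2)) F
    fun _ ↦ rfl, ← univ_product_univ, expect_product' univ univ fun v y ↦ F (Fin.cons v y),
    expect_comm]

theorem Fintype.abs_expect_le_of_forall_abs_le {β : Type*} [Fintype β] [Nonempty β] {g : β → ℝ}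
    {c : ℝ} (hg : ∀ v, |g v| ≤ c) : |𝔼 v, g v| ≤ c :=
  (abs_expect_le _ _).trans (expect_le univ_nonempty fun v _ ↦ hg v)

def HasBoundedDifferences {ι α : Type*} (f : (ι → α) → ℝ) : Prop :=
  ∀ x y : ι → α, ∀ i, (∀ j ≠ i, x j = y j) → |f x - f y| ≤ 1

namespace HasBoundedDifferences

variable {α : Type*}

theorem neg {ι : Type*} {f : (ι → α) → ℝ} (hf : HasBoundedDifferences f) :
    HasBoundedDifferences (-f) := by
  intro x y i hxy
  rw [Pi.neg_apply, Pi.neg_apply, neg_sub_neg, abs_sub_comm]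
  exact hf x y i hxy

variable [Fintype α] {n : ℕ}

theorem expect_cons {f : (Fin (n + 1) → α) → ℝ} (hf : HasBoundedDifferences f) :
    HasBoundedDifferences fun y : Fin n → α ↦ 𝔼 v, f (Fin.cons v y) := by
  intro y y' i hyy'
  have : Nonempty α := ⟨y i⟩
  rw [← expect_sub_distrib]
  refine Fintype.abs_expect_le_of_forall_abs_le fun v ↦ hf _ _ i.succ fun j hj ↦ ?_
  cases j using Fin.cases with
  | zero => rfl
  | succ k => simpa using hyy' k (ne_of_apply_ne Fin.succ hj)

theorem abs_sub_expect_cons_le {f : (Fin (n + 1) → α) → ℝ} (hf : HasBoundedDifferences f)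
    (y : Fin n → α) (v : α) : |f (Fin.cons v y) - 𝔼 w, f (Fin.cons w y)| ≤ 1 := by
  have : Nonempty α := ⟨v⟩
  rw [← Fintype.expect_const (ι := α) (f (Fin.cons v y)), ← expect_sub_distrib]
  refine Fintype.abs_expect_le_of_forall_abs_le fun w ↦ hf _ _ 0 fun j hj ↦ ?_
  cases j using Fin.cases with
  | zero => exact absurd rfl hj
  | succ k => rfl

variable [Nonempty α]

theorem expect_exp_mul_sub_expect_le {f : (Fin n → α) → ℝ} (hf : HasBoundedDifferences f)
    (l : ℝ) : 𝔼 x, exp (l * (f x - 𝔼 x', f x')) ≤ exp (n * l ^ 2 / 2) := by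
  induction n with
  | zero => simp [Subsingleton.elim _ (default : Fin 0 → α)]
  | succ n ih =>
    set g : (Fin n → α) → ℝ := fun y ↦ 𝔼 v, f (Fin.cons v y)
    have hg_mean : 𝔼 x, f x = 𝔼 y, g y := Fin.expect_fun_succ n f
    have h_fibre : ∀ y, 𝔼 v, exp (l * (f (Fin.cons v y) - g y)) ≤ exp (l ^ 2 / 2) := fun y ↦
      expect_exp_mul_le_of_expect_eq_zero
        (by rw [expect_sub_distrib, Fintype.expect_const, sub_self])
        (hf.abs_sub_expect_cons_le y) l
    calc 𝔼 x, exp (l * (f x - 𝔼 x', f x'))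
        = 𝔼 y, exp (l * (g y - 𝔼 y', g y')) * 𝔼 v, exp (l * (f (Fin.cons v y) - g y)) := by
          rw [Fin.expect_fun_succ, hg_mean]
          refine expect_congr rfl fun y _ ↦ ?_
          rw [mul_expect]
          refine expect_congr rfl fun v _ ↦ ?_
          rw [← exp_add]; ring_nf
      _ ≤ 𝔼 y, exp (l * (g y - 𝔼 y', g y')) * exp (l ^ 2 / 2) :=
          expect_le_expect fun y _ ↦ mul_le_mul_of_nonneg_left (h_fibre y) (exp_pos _).le
      _ ≤ exp (n * l ^ 2 / 2) * exp (l ^ 2 / 2) := by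
          rw [← expect_mul]
          exact mul_le_mul_of_nonneg_right (ih hf.expect_cons) (exp_pos _).le
      _ = exp ((n + 1 : ℕ) * l ^ 2 / 2) := by rw [← exp_add]; push_cast; ring_nf

variable {f : (Fin n → α) → ℝ}

theorem card_lt_sub_expect_le (hf : HasBoundedDifferences f) {t : ℝ} (ht : 0 ≤ t) :
    (#{x | t < f x - 𝔼 x', f x'} : ℝ) ≤ Fintype.card α ^ n * exp (-t ^ 2 / (2 * n)) := by
  set μ := 𝔼 x', f x'
  set l := t / n
  have hl : 0 ≤ l := by positivity
  have h_markov : (#{x | t < f x - μ} : ℝ) * exp (l * t) ≤ ∑ x, exp (l * (f x - μ)) :=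
    calc (#{x | t < f x - μ} : ℝ) * exp (l * t) = ∑ x ∈ {x | t < f x - μ}, exp (l * t) := by
          rw [sum_const, nsmul_eq_mul]
      _ ≤ ∑ x ∈ {x | t < f x - μ}, exp (l * (f x - μ)) := sum_le_sum fun x hx ↦
          exp_le_exp.2 (mul_le_mul_of_nonneg_left (mem_filter.1 hx).2.le hl)
      _ ≤ ∑ x, exp (l * (f x - μ)) :=
          sum_le_sum_of_subset_of_nonneg (filter_subset _ _) fun _ _ _ ↦ (exp_pos _).le
  have h_mgf : ∑ x, exp (l * (f x - μ)) ≤ Fintype.card α ^ n * exp (n * l ^ 2 / 2) := by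
    rw [← Fintype.card_mul_expect, Fintype.card_fun, Fintype.card_fin, Nat.cast_pow]
    gcongr
    exact hf.expect_exp_mul_sub_expect_le l
  calc (#{x | t < f x - μ} : ℝ)
      ≤ Fintype.card α ^ n * exp (n * l ^ 2 / 2) * exp (-(l * t)) := by
        rw [exp_neg, ← div_eq_mul_inv, le_div_iff₀ (exp_pos _)]
        exact h_markov.trans h_mgf
    _ = Fintype.card α ^ n * exp (-t ^ 2 / (2 * n)) := by
        rw [mul_assoc, ← exp_add]
        obtain rfl | hn := n.eq_zero_or_pos
        · simp [l]
        · congr 2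
          simp only [l]
          field_simp
          ring

theorem card_lt_abs_sub_expect_le (hf : HasBoundedDifferences f) {t : ℝ} (ht : 0 ≤ t) :
    (#{x | t < |f x - 𝔼 x', f x'|} : ℝ) ≤ 2 * (Fintype.card α ^ n * exp (-t ^ 2 / (2 * n))) := by
  classical
  have h_neg : ∀ x, (-f) x - 𝔼 x', (-f) x' = -(f x - 𝔼 x', f x') := fun x ↦ by
    simp only [Pi.neg_apply, expect_neg_distrib, neg_sub_neg, neg_sub]
  calc (#{x | t < |f x - 𝔼 x', f x'|} : ℝ)
      ≤ #((univ.filter fun x ↦ t < f x - 𝔼 x', f x') ∪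
          univ.filter fun x ↦ t < (-f) x - 𝔼 x', (-f) x') := by
        refine Nat.cast_le.2 (card_le_card fun x hx ↦ ?_)
        simp only [mem_union, mem_filter, mem_univ, true_and, h_neg] at hx ⊢
        exact lt_abs.1 hx
    _ ≤ #{x | t < f x - 𝔼 x', f x'} + #{x | t < (-f) x - 𝔼 x', (-f) x'} :=
        mod_cast card_union_le _ _
    _ ≤ 2 * (Fintype.card α ^ n * exp (-t ^ 2 / (2 * n))) := by
        linarith [hf.card_lt_sub_expect_le ht, hf.neg.card_lt_sub_expect_le ht]

end HasBoundedDifferences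

section EmptyBins

variable {ι α : Type*} [Fintype ι] [Fintype α] [DecidableEq α]

def emptyBins (x : ι → α) : Finset α := {j | ∀ i, x i ≠ j}

theorem emptyBins_subset_insert {x y : ι → α} {i : ι} (hxy : ∀ j ≠ i, x j = y j) :
    emptyBins x ⊆ insert (y i) (emptyBins y) := by
  intro b hb
  simp only [emptyBins, mem_insert, mem_filter, mem_univ, true_and] at hb ⊢
  by_contra! h
  obtain ⟨j, hj⟩ := h.2
  obtain rfl | hji := eq_or_ne j i
  · exact h.1 hj.symm
  · exact hb j ((hxy j hji).trans hj)

theorem hasBoundedDifferences_card_emptyBins :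
    HasBoundedDifferences fun x : ι → α ↦ (#(emptyBins x) : ℝ) := by
  have h_le : ∀ x y : ι → α, ∀ i, (∀ j ≠ i, x j = y j) →
      (#(emptyBins x) : ℝ) ≤ #(emptyBins y) + 1 := fun x y i hxy ↦
    mod_cast (card_le_card (emptyBins_subset_insert hxy)).trans (card_insert_le _ _)
  intro x y i hxy
  rw [abs_sub_le_iff]
  constructor
  · linarith [h_le x y i hxy]
  · linarith [h_le y x i fun j hj ↦ (hxy j hj).symm]

variable [DecidableEq ι]

theorem card_filter_forall_ne (j : α) :
    #{x : ι → α | ∀ i, x i ≠ j} = (Fintype.card α - 1) ^ Fintype.card ι := by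
  have : ({x | ∀ i, x i ≠ j} : Finset (ι → α)) = Fintype.piFinset fun _ ↦ univ.erase j := by
    ext x
    simp [Fintype.mem_piFinset]
  rw [this, Fintype.card_piFinset, prod_const, card_erase_of_mem (mem_univ j), card_univ,
    card_univ]

theorem sum_card_emptyBins :
    ∑ x : ι → α, #(emptyBins x) = Fintype.card α * (Fintype.card α - 1) ^ Fintype.card ι := by
  simp only [emptyBins, card_filter]
  rw [sum_comm]
  simp only [← card_filter, card_filter_forall_ne, sum_const, card_univ, smul_eq_mul]

theorem expect_card_emptyBins [Nonempty α] :
    𝔼 x : ι → α, (#(emptyBins x) : ℝ) =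
      Fintype.card α * (1 - 1 / Fintype.card α) ^ Fintype.card ι := by
  have hα : (0 : ℝ) < Fintype.card α := mod_cast Fintype.card_pos
  rw [Fintype.expect_eq_sum_div_card, ← Nat.cast_sum, sum_card_emptyBins, Fintype.card_fun]
  push_cast [Nat.cast_sub (Fintype.card_pos (α := α))]
  field_simp
  rw [div_pow, mul_div_cancel₀ _ (pow_ne_zero _ hα.ne')]

end EmptyBins

theorem ProbabilityTheory.iIndepFun.measure_tuple_mem_eq {Ω ι α : Type*} [MeasurableSpace Ω]
    {μ : Measure Ω} [Fintype ι] [Fintype α] [MeasurableSpace α] [MeasurableSingletonClass α]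
    {H : ι → Ω → α} (hindep : iIndepFun H μ) (hmeas : ∀ i, Measurable (H i))
    (hunif : ∀ i a, μ {ω | H i ω = a} = (Fintype.card α : ℝ≥0∞)⁻¹) (S : Finset (ι → α)) :
    μ {ω | (fun i ↦ H i ω) ∈ S} = #S * (Fintype.card α : ℝ≥0∞)⁻¹ ^ Fintype.card ι := by
  have h_atom : ∀ x : ι → α,
      μ (⋂ i, H i ⁻¹' {x i}) = (Fintype.card α : ℝ≥0∞)⁻¹ ^ Fintype.card ι := fun x ↦ by
    rw [hindep.meas_iInter fun i ↦ ⟨{x i}, measurableSet_singleton _, rfl⟩]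
    simp only [Set.preimage, Set.mem_singleton_iff, hunif, prod_const, card_univ]
  have h_disj : (S : Set (ι → α)).PairwiseDisjoint fun x ↦ ⋂ i, H i ⁻¹' {x i} :=
    fun x _ y _ hxy ↦ Set.disjoint_left.2 fun ω hx hy ↦ hxy <| funext fun i ↦
      (Set.mem_iInter.1 hx i : H i ω = x i).symm.trans (Set.mem_iInter.1 hy i)
  have h_union : {ω | (fun i ↦ H i ω) ∈ S} = ⋃ x ∈ S, ⋂ i, H i ⁻¹' {x i} := by
    ext ω
    simp only [Set.mem_ofPred_eq, Set.mem_iUnion, Set.mem_iInter, Set.mem_preimage,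
      Set.mem_singleton_iff, exists_prop]
    exact ⟨fun h ↦ ⟨_, h, fun _ ↦ rfl⟩, fun ⟨x, hx, hωx⟩ ↦ funext hωx ▸ hx⟩
  rw [h_union, measure_biUnion_finset h_disj fun x _ ↦
    .iInter fun i ↦ hmeas i (measurableSet_singleton _)]
  simp only [h_atom, sum_const, nsmul_eq_mul]

theorem zero_bits_concentration_general
    {Ω : Type*} [MeasureSpace Ω] [IsProbabilityMeasure (ℙ : Measure Ω)]
    (m N : ℕ) (hm : 1 ≤ m)
    (H : Fin N → Ω → Fin m)
    (hmeas : ∀ i, Measurable (H i))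
    (hindep : iIndepFun H ℙ)
    (hunif : ∀ (i : Fin N) (j : Fin m), ℙ {ω | H i ω = j} = 1 / (m : ℝ≥0∞))
    (p : ℝ) (hp : p = (1 - 1 / (m : ℝ)) ^ N)
    (ε : ℝ) (hε : 0 < ε) :
    (ℙ {ω | |((Finset.univ.filter (fun j : Fin m => ∀ i, H i ω ≠ j)).card : ℝ)
        - (m : ℝ) * p| > ε * m}).toReal
      ≤ 2 * Real.exp (-(ε ^ 2 * (m : ℝ) ^ 2) / (2 * N)) := by
  have : Nonempty (Fin m) := ⟨⟨0, hm⟩⟩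
  set S : Finset (Fin N → Fin m) := {x | ε * m < |(#(emptyBins x) : ℝ) - m * p|}
  have h_prob : ℙ {ω | |(#{j | ∀ i, H i ω ≠ j} : ℝ) - m * p| > ε * m} =
      #S * (m : ℝ≥0∞)⁻¹ ^ N := by
    simpa [S, emptyBins] using hindep.measure_tuple_mem_eq hmeas (by simpa using hunif) S
  have h_mean : 𝔼 x : Fin N → Fin m, (#(emptyBins x) : ℝ) = m * p := by
    simpa [hp] using expect_card_emptyBins (ι := Fin N) (α := Fin m)
  have h_count := (hasBoundedDifferences_card_emptyBins (ι := Fin N) (α := Fin m))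
    |>.card_lt_abs_sub_expect_le (by positivity : 0 ≤ ε * m)
  rw [h_mean] at h_count
  rw [h_prob, ENNReal.toReal_mul, ENNReal.toReal_pow, ENNReal.toReal_inv, ENNReal.toReal_natCast,
    ENNReal.toReal_natCast, inv_pow, ← div_eq_mul_inv, div_le_iff₀ (by positivity)]
  simp only [Fintype.card_fin, mul_pow] at h_count
  linarith

/-- Concentration (Mitzenmacher) for the number of zero bits of a Bloom filter:
`N ≥ 1` independent uniform hash evaluations into `m` bins; with `p = (1-1/m)^N`,
the number `Z` of empty bins deviates from `m·p` by more than `ε·m` with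
probability at most `2·exp(-ε²m²/(2N))`. -/
theorem zero_bits_concentration
    {Ω : Type*} [MeasureSpace Ω] [IsProbabilityMeasure (ℙ : Measure Ω)]
    (m N : ℕ) (hm : 1 ≤ m) (hN : 1 ≤ N)
    (H : Fin N → Ω → Fin m)
    (hmeas : ∀ i, Measurable (H i))
    (hindep : iIndepFun H ℙ)
    (hunif : ∀ (i : Fin N) (j : Fin m), ℙ {ω | H i ω = j} = 1 / (m : ℝ≥0∞))
    (p : ℝ) (hp : p = (1 - 1 / (m : ℝ)) ^ N)
    (ε : ℝ) (hε : 0 < ε) :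
    (ℙ {ω | |((Finset.univ.filter (fun j : Fin m => ∀ i, H i ω ≠ j)).card : ℝ)
        - (m : ℝ) * p| > ε * m}).toReal
      ≤ 2 * Real.exp (-(ε ^ 2 * (m : ℝ) ^ 2) / (2 * N)) :=
  zero_bits_concentration_general m N hm H hmeas hindep hunif p hp ε hε
end

section
/- Let a, b be positive real numbers, let ε be a real number with 0 ≤ ε < 1/2, and let â, b̂ be real numbers with (1 − ε)·a ≤ â ≤ (1 + ε)·a and (1 − ε)·b ≤ b̂ ≤ (1 + ε)·b. Then (1 − 2ε)·a/(a + b) ≤ â/(â + b̂) ≤ (1 + 4ε)·a/(a + b). -/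
/-- If `â` and `b̂` estimate `a > 0` and `b > 0` within relative error
`ε < 1/2`, then the selection probability `â/(â+b̂)` is within the window
`[(1-2ε)·a/(a+b), (1+4ε)·a/(a+b)]` of the unbiased probability. -/
theorem selection_probability_bounds
    (a b : ℝ) (ha : 0 < a) (hb : 0 < b)
    (ε : ℝ) (hε0 : 0 ≤ ε) (hε : ε < 1 / 2)
    (ahat bhat : ℝ)
    (ha1 : (1 - ε) * a ≤ ahat) (ha2 : ahat ≤ (1 + ε) * a)
    (hb1 : (1 - ε) * b ≤ bhat) (hb2 : bhat ≤ (1 + ε) * b) :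
    (1 - 2 * ε) * (a / (a + b)) ≤ ahat / (ahat + bhat)
      ∧ ahat / (ahat + bhat) ≤ (1 + 4 * ε) * (a / (a + b)) := by
  have h1 : (0:ℝ) < 1 - ε := by linarith
  have hah : 0 < ahat := lt_of_lt_of_le (by positivity) ha1
  have hbh : 0 < bhat := lt_of_lt_of_le (by positivity) hb1
  have hd : 0 < ahat + bhat := by linarith
  have hab : 0 < a + b := by linarith
  constructor
  · rw [mul_div_assoc', div_le_div_iff₀ hab hd]
    nlinarith [mul_le_mul_of_nonneg_left ha2 hε0, mul_le_mul_of_nonneg_left hb2 hε0,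
      mul_le_mul_of_nonneg_left ha1 hε0, mul_pos ha hb, sq_nonneg ε]
  · rw [mul_div_assoc', div_le_div_iff₀ hd hab]
    have h5 : ahat*(a+b) ≤ (1+ε)*a*(a+b) := mul_le_mul_of_nonneg_right ha2 hab.le
    have h6 : (1-ε)*(a+b)*a ≤ (ahat+bhat)*a := by nlinarith
    nlinarith [mul_nonneg (mul_nonneg hε0 (show (0:ℝ) ≤ 1-2*ε by linarith)) (mul_pos ha hab).le]
end
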